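/- Let f ∈ C²([a,b]) with m₂ ≤ f'' ≤ M₂ on [a,b]. Then for x ∈ [a,b]: (b-a)(m₂-M₂)/32 · 4(b-x)(x-a)/(b-a) ≤ f(x) - Π*(f)(x) ≤ (b-a)(M₂-m₂)/32 · 4(b-x)(x-a)/(b-a), i.e. |f(x) - Π*(f)(x)| ≤ (b-x)(x-a)(M₂-m₂)/8, where Π*(f)(x) = Π(f)(x) - ((f'(b)-f'(a))/(2(b-a)))(b-x)(x-a). -/

import Mathlib

/-!
Integrating by parts twice on `[a, x]` and on `[x, b]` gives
`f x - Π*(f)(x) = (x - a)/(b - a) ∫_x^b (t - (x + b)/2) f''`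
`               - (b - x)/(b - a) ∫_a^x (t - (a + x)/2) f''`:
the correction term of `Π*` is exactly what lets both kernels be centred at the midpoints of
their intervals. A centred kernel integrates constants to zero, so `f''` may be replaced by
`f'' - (m₂ + M₂)/2`, which is bounded by `(M₂ - m₂)/2`; then
`∫_p^q |t - (p + q)/2| = (q - p)²/4` and
`(x - a)(b - x)² + (b - x)(x - a)² = (b - a)(b - x)(x - a)` give the bound.
-/

open Set intervalIntegral
open MeasureTheory (volume)

theorem integral_sub_midpoint_eq_zero (p q : ℝ) : ∫ t in p..q, (t - (p + q) / 2) = 0 := by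
  rw [integral_sub intervalIntegrable_id intervalIntegrable_const]
  simp only [intervalIntegral.integral_const, integral_id, smul_eq_mul]
  ring

theorem integral_abs_sub_midpoint {p q : ℝ} (hpq : p ≤ q) :
    ∫ t in p..q, |t - (p + q) / 2| = (q - p) ^ 2 / 4 := by
  have hpc : p ≤ (p + q) / 2 := by linarith
  have hcq : (p + q) / 2 ≤ q := by linarith
  have hint : ∀ u v : ℝ, IntervalIntegrable (fun t => |t - (p + q) / 2|) volume u v :=
    fun u v => (continuous_abs.comp (continuous_id.sub continuous_const)).intervalIntegrable u v
  have hleft : ∫ t in p..(p + q) / 2, |t - (p + q) / 2|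
      = ∫ t in p..(p + q) / 2, ((p + q) / 2 - t) :=
    integral_congr fun t ht => by
      rw [uIcc_of_le hpc] at ht
      rw [abs_of_nonpos (by linarith [ht.2])]
      ring
  have hright : ∫ t in (p + q) / 2..q, |t - (p + q) / 2|
      = ∫ t in (p + q) / 2..q, (t - (p + q) / 2) :=
    integral_congr fun t ht => by
      rw [uIcc_of_le hcq] at ht
      rw [abs_of_nonneg (by linarith [ht.1])]
  rw [← integral_add_adjacent_intervals (hint p _) (hint _ q), hleft, hright,
    integral_sub intervalIntegrable_const intervalIntegrable_id,
    integral_sub intervalIntegrable_id intervalIntegrable_const]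
  simp only [intervalIntegral.integral_const, integral_id, smul_eq_mul]
  ring

theorem abs_integral_sub_midpoint_mul_le {p q m M : ℝ} {h : ℝ → ℝ} (hpq : p ≤ q)
    (hint : IntervalIntegrable h volume p q)
    (hm : ∀ t ∈ Icc p q, m ≤ h t) (hM : ∀ t ∈ Icc p q, h t ≤ M) :
    |∫ t in p..q, (t - (p + q) / 2) * h t| ≤ (M - m) * (q - p) ^ 2 / 8 := by
  have hcont : Continuous fun t : ℝ => t - (p + q) / 2 := continuous_id.sub continuous_const
  have hcentred : ∫ t in p..q, (t - (p + q) / 2) * h t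
      = ∫ t in p..q, (t - (p + q) / 2) * (h t - (m + M) / 2) := by
    simp only [mul_sub]
    rw [integral_sub (hint.continuousOn_mul hcont.continuousOn)
      ((hcont.intervalIntegrable p q).mul_const _), intervalIntegral.integral_mul_const,
      integral_sub_midpoint_eq_zero, zero_mul, sub_zero]
  have hdev : ∀ t ∈ Icc p q, |h t - (m + M) / 2| ≤ (M - m) / 2 := fun t ht =>
    abs_le.mpr ⟨by linarith [hm t ht], by linarith [hM t ht]⟩
  calc |∫ t in p..q, (t - (p + q) / 2) * h t|
      ≤ ∫ t in p..q, |(t - (p + q) / 2) * (h t - (m + M) / 2)| := by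
        rw [hcentred]
        exact abs_integral_le_integral_abs hpq
    _ ≤ ∫ t in p..q, (M - m) / 2 * |t - (p + q) / 2| := by
        refine integral_mono_on hpq ?_ ?_ fun t ht => ?_
        · exact ((hint.sub intervalIntegrable_const).continuousOn_mul hcont.continuousOn).abs
        · exact (hcont.abs.intervalIntegrable p q).const_mul _
        · rw [abs_mul, mul_comm]
          exact mul_le_mul_of_nonneg_right (hdev t ht) (abs_nonneg _)
    _ = (M - m) * (q - p) ^ 2 / 8 := by
        rw [intervalIntegral.integral_const_mul, integral_abs_sub_midpoint hpq]
        ring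

theorem integral_sub_midpoint_mul_second_deriv {p q : ℝ} {f f' f'' : ℝ → ℝ} (hpq : p ≤ q)
    (hf : ∀ t ∈ Icc p q, HasDerivWithinAt f (f' t) (Icc p q) t)
    (hf' : ∀ t ∈ Icc p q, HasDerivWithinAt f' (f'' t) (Icc p q) t)
    (hint : IntervalIntegrable f'' volume p q) :
    ∫ t in p..q, (t - (p + q) / 2) * f'' t = (q - p) / 2 * (f' p + f' q) - (f q - f p) := by
  have hderiv : ∀ t ∈ Icc p q, HasDerivWithinAt (fun s => (s - (p + q) / 2) * f' s - f s)
      ((t - (p + q) / 2) * f'' t) (Icc p q) t := fun t ht => by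
    refine ((((hasDerivWithinAt_id (x := t) (s := Icc p q)).sub_const ((p + q) / 2)).mul
      (hf' t ht)).sub (hf t ht)).congr_deriv ?_
    simp only [id]
    ring
  rw [integral_eq_sub_of_hasDeriv_right_of_le hpq
    (fun t ht => (hderiv t ht).continuousWithinAt)
    (fun t ht => ((hderiv t (Ioo_subset_Icc_self ht)).hasDerivAt
      (Icc_mem_nhds ht.1 ht.2)).hasDerivWithinAt)
    (hint.continuousOn_mul (continuous_id.sub continuous_const).continuousOn)]
  ring

section CorrectedInterpolant

variable {a b x : ℝ} {f f' f'' : ℝ → ℝ}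

theorem sub_correctedInterpolant_eq (hab : a < b) (hx : x ∈ Icc a b)
    (hf' : ∀ t ∈ Icc a b, HasDerivWithinAt f (f' t) (Icc a b) t)
    (hf'' : ∀ t ∈ Icc a b, HasDerivWithinAt f' (f'' t) (Icc a b) t)
    (hint : IntervalIntegrable f'' volume a b) :
    f x - ((f a * (x - b) / (a - b) + f b * (x - a) / (b - a))
        - ((f' b - f' a) / (2 * (b - a))) * (b - x) * (x - a))
      = (x - a) / (b - a) * (∫ t in x..b, (t - (x + b) / 2) * f'' t)
        - (b - x) / (b - a) * ∫ t in a..x, (t - (a + x) / 2) * f'' t := by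
  have hax : Icc a x ⊆ Icc a b := Icc_subset_Icc_right hx.2
  have hxb : Icc x b ⊆ Icc a b := Icc_subset_Icc_left hx.1
  have hx' : x ∈ uIcc a b := Icc_subset_uIcc hx
  rw [integral_sub_midpoint_mul_second_deriv hx.2 (fun t ht => (hf' t (hxb ht)).mono hxb)
      (fun t ht => (hf'' t (hxb ht)).mono hxb)
      (hint.mono_set (uIcc_subset_uIcc hx' right_mem_uIcc)),
    integral_sub_midpoint_mul_second_deriv hx.1 (fun t ht => (hf' t (hax ht)).mono hax)
      (fun t ht => (hf'' t (hax ht)).mono hax)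
      (hint.mono_set (uIcc_subset_uIcc left_mem_uIcc hx'))]
  have hba : b - a ≠ 0 := sub_ne_zero.mpr hab.ne'
  have hab' : a - b ≠ 0 := sub_ne_zero.mpr hab.ne
  field_simp
  ring

theorem abs_sub_correctedInterpolant_le {m₂ M₂ : ℝ} (hab : a < b) (hx : x ∈ Icc a b)
    (hf' : ∀ t ∈ Icc a b, HasDerivWithinAt f (f' t) (Icc a b) t)
    (hf'' : ∀ t ∈ Icc a b, HasDerivWithinAt f' (f'' t) (Icc a b) t)
    (hint : IntervalIntegrable f'' volume a b)
    (hm : ∀ t ∈ Icc a b, m₂ ≤ f'' t) (hM : ∀ t ∈ Icc a b, f'' t ≤ M₂) :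
    |f x - ((f a * (x - b) / (a - b) + f b * (x - a) / (b - a))
        - ((f' b - f' a) / (2 * (b - a))) * (b - x) * (x - a))|
      ≤ (b - x) * (x - a) * (M₂ - m₂) / 8 := by
  have hax : Icc a x ⊆ Icc a b := Icc_subset_Icc_right hx.2
  have hxb : Icc x b ⊆ Icc a b := Icc_subset_Icc_left hx.1
  have hx' : x ∈ uIcc a b := Icc_subset_uIcc hx
  have hleft := abs_integral_sub_midpoint_mul_le hx.1
    (hint.mono_set (uIcc_subset_uIcc left_mem_uIcc hx')) (fun t ht => hm t (hax ht))
    (fun t ht => hM t (hax ht))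
  have hright := abs_integral_sub_midpoint_mul_le hx.2
    (hint.mono_set (uIcc_subset_uIcc hx' right_mem_uIcc)) (fun t ht => hm t (hxb ht))
    (fun t ht => hM t (hxb ht))
  have hba : 0 < b - a := sub_pos.mpr hab
  have hwa : 0 ≤ (x - a) / (b - a) := div_nonneg (sub_nonneg.mpr hx.1) hba.le
  have hwb : 0 ≤ (b - x) / (b - a) := div_nonneg (sub_nonneg.mpr hx.2) hba.le
  rw [sub_correctedInterpolant_eq hab hx hf' hf'' hint]
  refine (abs_sub _ _).trans ?_
  rw [abs_mul, abs_mul, abs_of_nonneg hwa, abs_of_nonneg hwb]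
  calc _ ≤ (x - a) / (b - a) * ((M₂ - m₂) * (b - x) ^ 2 / 8)
        + (b - x) / (b - a) * ((M₂ - m₂) * (x - a) ^ 2 / 8) :=
        add_le_add (mul_le_mul_of_nonneg_left hright hwa) (mul_le_mul_of_nonneg_left hleft hwb)
    _ = (b - x) * (x - a) * (M₂ - m₂) / 8 := by
        field_simp
        ring

end CorrectedInterpolant

theorem corrected_interpolation_pointwise_bound
    (a b m₂ M₂ : ℝ) (f f' f'' : ℝ → ℝ) (hab : a < b)
    (hf' : ∀ x ∈ Set.Icc a b, HasDerivWithinAt f (f' x) (Set.Icc a b) x)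
    (hf'' : ∀ x ∈ Set.Icc a b, HasDerivWithinAt f' (f'' x) (Set.Icc a b) x)
    (hcont : ContinuousOn f'' (Set.Icc a b))
    (hm : ∀ x ∈ Set.Icc a b, m₂ ≤ f'' x)
    (hM : ∀ x ∈ Set.Icc a b, f'' x ≤ M₂)
    (x : ℝ) (hx : x ∈ Set.Icc a b) :
    ((b - a) * (m₂ - M₂) / 32) * (4 * (b - x) * (x - a) / (b - a))
        ≤ f x - ((f a * (x - b) / (a - b) + f b * (x - a) / (b - a))
            - ((f' b - f' a) / (2 * (b - a))) * (b - x) * (x - a))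
    ∧ f x - ((f a * (x - b) / (a - b) + f b * (x - a) / (b - a))
            - ((f' b - f' a) / (2 * (b - a))) * (b - x) * (x - a))
        ≤ ((b - a) * (M₂ - m₂) / 32) * (4 * (b - x) * (x - a) / (b - a))
    ∧ |f x - ((f a * (x - b) / (a - b) + f b * (x - a) / (b - a))
            - ((f' b - f' a) / (2 * (b - a))) * (b - x) * (x - a))|
        ≤ (b - x) * (x - a) * (M₂ - m₂) / 8 := by
  have habs := abs_sub_correctedInterpolant_le hab hx hf' hf''
    (hcont.intervalIntegrable_of_Icc hab.le) hm hM
  have hscale : ((b - a) * (M₂ - m₂) / 32) * (4 * (b - x) * (x - a) / (b - a))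
      = (b - x) * (x - a) * (M₂ - m₂) / 8 := by
    field_simp [(sub_pos.mpr hab).ne']
    ring
  rw [show (b - a) * (m₂ - M₂) / 32 = -((b - a) * (M₂ - m₂) / 32) by ring, neg_mul, hscale]
  exact ⟨(abs_le.mp habs).1, (abs_le.mp habs).2, habs⟩
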